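/- arXiv:2105.00416 — 4 statements merged into one kernel-verified Lean document; each statement's English description precedes it below -/
import Mathlib

section
/- Let A be an m×n matrix, b ∈ ℝ^m, η ∈ ℝⁿ with η'η > 0, and let D = η(η'η)^{-1}. For y ∈ ℝⁿ write z = (I - Dη')y. Then {y : Ay ≤ b} = {y : V⁻(z) ≤ η'y ≤ V⁺(z), V⁰(z) ≥ 0}, where V⁻(z) = max over k with (AD)_k < 0 of (b_k - (Az)_k)/(AD)_k, V⁺(z) = min over k with (AD)_k > 0 of (b_k - (Az)_k)/(AD)_k, and V⁰(z) = min over k with (AD)_k = 0 of (b_k - (Az)_k). -/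
open Matrix

/-- polyhedral lemma: with `D = η(η'η)⁻¹` and `z = (I - Dη')y`, the polyhedron
`{y : Ay ≤ b}` equals the set of `y` with `V⁻(z) ≤ η'y ≤ V⁺(z)` and `V⁰(z) ≥ 0`, where the
max/min over empty index sets are `-∞`/`+∞` (computed in `EReal`). -/
theorem polyhedral_lemma
    {m n : ℕ} (A : Matrix (Fin m) (Fin n) ℝ) (b : Fin m → ℝ)
    (η : Fin n → ℝ) (hη : 0 < η ⬝ᵥ η) :
    {y : Fin n → ℝ | ∀ k, A.mulVec y k ≤ b k} =
      {y : Fin n → ℝ |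
        letI D : Fin n → ℝ := (1 / (η ⬝ᵥ η)) • η
        letI z : Fin n → ℝ := y - (η ⬝ᵥ y) • D
        letI Vminus : EReal := ⨆ k : {k : Fin m // A.mulVec D k < 0},
          (((b k.1 - A.mulVec z k.1) / A.mulVec D k.1 : ℝ) : EReal)
        letI Vplus : EReal := ⨅ k : {k : Fin m // 0 < A.mulVec D k},
          (((b k.1 - A.mulVec z k.1) / A.mulVec D k.1 : ℝ) : EReal)
        letI Vzero : EReal := ⨅ k : {k : Fin m // A.mulVec D k = 0},
          (((b k.1 - A.mulVec z k.1) : ℝ) : EReal)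
        Vminus ≤ ((η ⬝ᵥ y : ℝ) : EReal) ∧ ((η ⬝ᵥ y : ℝ) : EReal) ≤ Vplus ∧
          (0 : EReal) ≤ Vzero} := by
  ext y
  simp only [Set.mem_setOf_eq]
  set D : Fin n → ℝ := (1 / (η ⬝ᵥ η)) • η with hD
  set z : Fin n → ℝ := y - (η ⬝ᵥ y) • D with hz
  set t : ℝ := η ⬝ᵥ y with ht
  set c : Fin m → ℝ := A.mulVec D with hc
  set r : Fin m → ℝ := fun k => b k - A.mulVec z k with hr
  have key : ∀ k, A.mulVec y k = A.mulVec z k + t * c k := by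
    intro k
    have hy : y = z + t • D := by simp [hz]
    rw [hc]
    conv_lhs => rw [hy]
    rw [Matrix.mulVec_add, Matrix.mulVec_smul]
    simp [Pi.add_apply, smul_eq_mul]
  have main : (∀ k, A.mulVec y k ≤ b k) ↔ ∀ k, t * c k ≤ r k := by
    constructor
    · intro h k; have := h k; rw [key k] at this; simp only [hr]; linarith
    · intro h k; have := h k; rw [key k]; simp only [hr] at this; linarith
  rw [main]
  have hsup : ((⨆ k : {k : Fin m // c k < 0}, ((r k.1 / c k.1 : ℝ) : EReal)) ≤ (t : EReal))
      ↔ ∀ k : Fin m, c k < 0 → r k / c k ≤ t := by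
    rw [iSup_le_iff]
    constructor
    · intro h k hk; exact EReal.coe_le_coe_iff.mp (h ⟨k, hk⟩)
    · intro h k; exact EReal.coe_le_coe_iff.mpr (h k.1 k.2)
  have hinf : ((t : EReal) ≤ ⨅ k : {k : Fin m // 0 < c k}, ((r k.1 / c k.1 : ℝ) : EReal))
      ↔ ∀ k : Fin m, 0 < c k → t ≤ r k / c k := by
    rw [le_iInf_iff]
    constructor
    · intro h k hk; exact EReal.coe_le_coe_iff.mp (h ⟨k, hk⟩)
    · intro h k; exact EReal.coe_le_coe_iff.mpr (h k.1 k.2)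
  have hzero : ((0 : EReal) ≤ ⨅ k : {k : Fin m // c k = 0}, ((r k.1 : ℝ) : EReal))
      ↔ ∀ k : Fin m, c k = 0 → 0 ≤ r k := by
    rw [le_iInf_iff]
    constructor
    · intro h k hk
      have := h ⟨k, hk⟩
      exact_mod_cast this
    · intro h k
      exact_mod_cast h k.1 k.2
  rw [hsup, hinf, hzero]
  constructor
  · intro h
    refine ⟨fun k hk => ?_, fun k hk => ?_, fun k hk => ?_⟩
    · rw [div_le_iff_of_neg hk]; exact h k
    · rw [le_div_iff₀ hk]; exact h k
    · have := h k; rw [hk, mul_zero] at this; linarith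
  · rintro ⟨h1, h2, h3⟩ k
    rcases lt_trichotomy (c k) 0 with hk | hk | hk
    · have := h1 k hk; rw [div_le_iff_of_neg hk] at this; exact this
    · have := h3 k hk; rw [hk, mul_zero]; linarith
    · have := h2 k hk; rw [le_div_iff₀ hk] at this; exact this
end

section
/- Fix a < b with a < b. The map μ ↦ F_{μ,σ²}^{[a,b]}(x) is strictly decreasing in μ for each fixed x ∈ (a, b) and σ > 0, where F_{μ,σ²}^{[a,b]} is the CDF of the normal distribution N(μ,σ²) truncated to [a,b]. -/
/-! If `g / f` is increasing on `[a, b]`, then `g` puts relatively more of its mass on `[x, b]`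
than `f` does: comparing both integrands with the pivot value of the ratio at `x` gives
`(∫ₐˣ g) f(x) < (∫ₐˣ f) g(x)` and `(∫ₓᵇ f) g(x) ≤ (∫ₓᵇ g) f(x)`.
For normal densities with equal variance the ratio `φ(s - m₂) / φ(s - m₁)` is the exponential
of an affine function of `s`, increasing when `m₁ < m₂`, and after the change of variables
`s ↦ s / σ` the truncated normal CDF is exactly such a ratio of integrals. -/

open MeasureTheory ProbabilityTheory

/-- The CDF `Φ` of the standard normal distribution. -/
noncomputable def stdNormalCDF : ℝ → ℝ := fun x => ProbabilityTheory.cdf (gaussianReal 0 1) x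

/-- The CDF of the truncated normal distribution `TN(μ, σ², a, b)`. -/
noncomputable def truncNormalCDF (μ σ a b x : ℝ) : ℝ :=
  (stdNormalCDF ((x - μ) / σ) - stdNormalCDF ((a - μ) / σ)) /
    (stdNormalCDF ((b - μ) / σ) - stdNormalCDF ((a - μ) / σ))

open Set intervalIntegral
open scoped NNReal

section LikelihoodRatio

variable {f g : ℝ → ℝ} {a b x : ℝ}

theorem integral_mul_lt_integral_mul_of_strictMonoOn_div (hf : ContinuousOn f (Icc a x))
    (hg : ContinuousOn g (Icc a x)) (hf_pos : ∀ s ∈ Icc a x, 0 < f s)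
    (hgf : StrictMonoOn (fun s => g s / f s) (Icc a x)) (hax : a < x) :
    (∫ s in a..x, g s) * f x < (∫ s in a..x, f s) * g x := by
  have hx : x ∈ Icc a x := right_mem_Icc.2 hax.le
  rw [← intervalIntegral.integral_mul_const, ← intervalIntegral.integral_mul_const]
  refine integral_lt_integral_of_continuousOn_of_le_of_exists_lt hax
    (hg.mul continuousOn_const) (hf.mul continuousOn_const) (fun s hs => ?_)
    ⟨a, left_mem_Icc.2 hax.le, ?_⟩
  · have hs : s ∈ Icc a x := Ioc_subset_Icc_self hs
    have := hgf.monotoneOn hs hx hs.2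
    rw [div_le_div_iff₀ (hf_pos s hs) (hf_pos x hx)] at this
    linarith
  · have ha : a ∈ Icc a x := left_mem_Icc.2 hax.le
    have := hgf ha hx hax
    rw [div_lt_div_iff₀ (hf_pos a ha) (hf_pos x hx)] at this
    linarith

theorem integral_mul_le_integral_mul_of_monotoneOn_div (hf : ContinuousOn f (Icc x b))
    (hg : ContinuousOn g (Icc x b)) (hf_pos : ∀ s ∈ Icc x b, 0 < f s)
    (hgf : MonotoneOn (fun s => g s / f s) (Icc x b)) (hxb : x ≤ b) :
    (∫ s in x..b, f s) * g x ≤ (∫ s in x..b, g s) * f x := by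
  have hx : x ∈ Icc x b := left_mem_Icc.2 hxb
  rw [← intervalIntegral.integral_mul_const, ← intervalIntegral.integral_mul_const]
  refine integral_mono_on hxb ((hf.mul continuousOn_const).intervalIntegrable_of_Icc hxb)
    ((hg.mul continuousOn_const).intervalIntegrable_of_Icc hxb) fun s hs => ?_
  have := hgf hx hs hs.1
  rw [div_le_div_iff₀ (hf_pos x hx) (hf_pos s hs)] at this
  linarith

theorem integral_div_integral_lt_of_strictMonoOn_div (hf : ContinuousOn f (Icc a b))
    (hg : ContinuousOn g (Icc a b)) (hf_pos : ∀ s ∈ Icc a b, 0 < f s)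
    (hg_pos : ∀ s ∈ Icc a b, 0 < g s) (hgf : StrictMonoOn (fun s => g s / f s) (Icc a b))
    (hx : x ∈ Ioo a b) :
    (∫ s in a..x, g s) / (∫ s in a..b, g s) < (∫ s in a..x, f s) / (∫ s in a..b, f s) := by
  obtain ⟨hax, hxb⟩ := hx
  have hleft : Icc a x ⊆ Icc a b := Icc_subset_Icc_right hxb.le
  have hright : Icc x b ⊆ Icc a b := Icc_subset_Icc_left hax.le
  have integral_pos {h : ℝ → ℝ} {c d : ℝ} (hc : ContinuousOn h (Icc c d))
      (hpos : ∀ s ∈ Icc c d, 0 < h s) (hcd : c < d) : 0 < ∫ s in c..d, h s :=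
    intervalIntegral_pos_of_pos_on (hc.intervalIntegrable_of_Icc hcd.le)
      (fun s hs => hpos s (Ioo_subset_Icc_self hs)) hcd
  have split {h : ℝ → ℝ} (hc : ContinuousOn h (Icc a b)) :
      ∫ s in a..b, h s = (∫ s in a..x, h s) + ∫ s in x..b, h s :=
    (integral_add_adjacent_intervals ((hc.mono hleft).intervalIntegrable_of_Icc hax.le)
      ((hc.mono hright).intervalIntegrable_of_Icc hxb.le)).symm
  have hAf := integral_pos (hf.mono hleft) (fun s hs => hf_pos s (hleft hs)) hax
  have hAg := integral_pos (hg.mono hleft) (fun s hs => hg_pos s (hleft hs)) hax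
  have hBf := integral_pos (hf.mono hright) (fun s hs => hf_pos s (hright hs)) hxb
  have hBg := integral_pos (hg.mono hright) (fun s hs => hg_pos s (hright hs)) hxb
  have hfx := hf_pos x ⟨hax.le, hxb.le⟩
  have hlow := integral_mul_lt_integral_mul_of_strictMonoOn_div (hf.mono hleft) (hg.mono hleft)
    (fun s hs => hf_pos s (hleft hs)) (hgf.mono hleft) hax
  have hhigh := integral_mul_le_integral_mul_of_monotoneOn_div (hf.mono hright) (hg.mono hright)
    (fun s hs => hf_pos s (hright hs)) (hgf.monotoneOn.mono hright) hxb.le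
  rw [split hf, split hg, div_lt_div_iff₀ (by positivity) (by positivity)]
  have hcross : (∫ s in a..x, g s) * (∫ s in x..b, f s) < (∫ s in a..x, f s) * ∫ s in x..b, g s :=
    lt_of_mul_lt_mul_right (by nlinarith [mul_lt_mul_of_pos_left hlow hBf,
      mul_le_mul_of_nonneg_left hhigh hAf.le]) hfx.le
  linarith

end LikelihoodRatio

theorem continuous_gaussianPDFReal (m : ℝ) (v : ℝ≥0) : Continuous (gaussianPDFReal m v) := by
  rw [gaussianPDFReal_def]
  fun_prop

theorem strictMono_gaussianPDFReal_div {m₁ m₂ : ℝ} (hm : m₁ < m₂) {v : ℝ≥0} (hv : v ≠ 0) :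
    StrictMono fun s => gaussianPDFReal m₂ v s / gaussianPDFReal m₁ v s := by
  have hexp : (fun s => gaussianPDFReal m₂ v s / gaussianPDFReal m₁ v s) =
      fun s => Real.exp ((m₂ - m₁) / v * s + (m₁ ^ 2 - m₂ ^ 2) / (2 * v)) := by
    ext s
    rw [gaussianPDFReal, gaussianPDFReal, mul_div_mul_left _ _ (by positivity), ← Real.exp_sub]
    congr 1
    field_simp
    ring
  rw [hexp]
  exact Real.exp_strictMono.comp fun s t hst => by gcongr

theorem stdNormalCDF_sub_eq_integral {c d : ℝ} (hcd : c ≤ d) :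
    stdNormalCDF d - stdNormalCDF c = ∫ s in c..d, gaussianPDFReal 0 1 s := by
  have hΦ : 0 ≤ stdNormalCDF d - stdNormalCDF c := sub_nonneg.2 ((cdf _).mono hcd)
  have hp : 0 ≤ ∫ s in c..d, gaussianPDFReal 0 1 s :=
    integral_nonneg hcd fun s _ => gaussianPDFReal_nonneg 0 1 s
  rw [← ENNReal.ofReal_eq_ofReal_iff hΦ hp, integral_of_le hcd,
    ← gaussianReal_apply_eq_integral 0 one_ne_zero, stdNormalCDF, stdNormalCDF,
    ← StieltjesFunction.measure_Ioc, measure_cdf]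

theorem stdNormalCDF_sub_sub_eq_integral (m : ℝ) {c d : ℝ} (hcd : c ≤ d) :
    stdNormalCDF (d - m) - stdNormalCDF (c - m) = ∫ s in c..d, gaussianPDFReal m 1 s := by
  rw [stdNormalCDF_sub_eq_integral (by linarith), ← integral_comp_sub_right]
  simp only [gaussianPDFReal_sub, zero_add]

theorem truncNormalCDF_eq_integral_div {μ σ a b x : ℝ} (hσ : 0 < σ) (hax : a ≤ x) (hab : a ≤ b) :
    truncNormalCDF μ σ a b x = (∫ s in a / σ..x / σ, gaussianPDFReal (μ / σ) 1 s) /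
      ∫ s in a / σ..b / σ, gaussianPDFReal (μ / σ) 1 s := by
  simp only [truncNormalCDF, sub_div _ μ σ]
  rw [stdNormalCDF_sub_sub_eq_integral _ (by gcongr), stdNormalCDF_sub_sub_eq_integral _ (by gcongr)]

theorem truncNormalCDF_strictAnti_in_mean_general
    (a b σ x : ℝ) (hσ : 0 < σ) (hx : x ∈ Set.Ioo a b) :
    StrictAnti (fun μ : ℝ => truncNormalCDF μ σ a b x) := by
  intro μ₁ μ₂ hμ
  have hxσ : x / σ ∈ Ioo (a / σ) (b / σ) :=
    ⟨div_lt_div_of_pos_right hx.1 hσ, div_lt_div_of_pos_right hx.2 hσ⟩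
  have hab : a ≤ b := hx.1.le.trans hx.2.le
  simp only [truncNormalCDF_eq_integral_div hσ hx.1.le hab]
  exact integral_div_integral_lt_of_strictMonoOn_div
    (continuous_gaussianPDFReal _ _).continuousOn (continuous_gaussianPDFReal _ _).continuousOn
    (fun s _ => gaussianPDFReal_pos _ _ s one_ne_zero)
    (fun s _ => gaussianPDFReal_pos _ _ s one_ne_zero)
    ((strictMono_gaussianPDFReal_div (div_lt_div_of_pos_right hμ hσ) one_ne_zero).strictMonoOn _)
    hxσ

/-- for fixed `x ∈ (a,b)` and `σ > 0`, the truncated normal CDF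
`μ ↦ F_{μ,σ²}^{[a,b]}(x)` is strictly decreasing in the mean parameter `μ`. -/
theorem truncNormalCDF_strictAnti_in_mean
    (a b σ x : ℝ) (hab : a < b) (hσ : 0 < σ) (hx : x ∈ Set.Ioo a b) :
    StrictAnti (fun μ : ℝ => truncNormalCDF μ σ a b x) :=
  truncNormalCDF_strictAnti_in_mean_general a b σ x hσ hx
end

section
/- If for a model selection procedure M̂ and confidence intervals C_j^M the conditional coverage P(β_j^M ∈ C_j^M | M̂ = M) ≥ 1 - α holds for every model M with P(M̂ = M) > 0 and every j ∈ M, then the false coverage rate is controlled: E[ |{j ∈ M̂ : β_j^{M̂} ∉ C_j^{M̂}}| / |M̂| ; |M̂| > 0 ] ≤ α. -/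
open MeasureTheory ProbabilityTheory
open scoped Classical

/-! On the event `{M̂ = M}` the false-coverage proportion is `|M|⁻¹ ∑_{j ∈ M} 1[β_j^M ∉ C_j^M]`,
whose integral is `|M|⁻¹ ∑_{j ∈ M} P(M̂ = M, β_j^M ∉ C_j^M)`. Conditional coverage bounds each
summand by `α P(M̂ = M)`, and summing over the finitely many nonempty models gives at most
`α P(M̂ ≠ ∅) ≤ α`. -/

open Finset

section

variable {Ω ι : Type*}

theorem card_filter_notMem_eq_sum_indicator (M : Finset ι) (B : ι → Set Ω) (ω : Ω) :
    (#{j ∈ M | ω ∉ B j} : ℝ) = ∑ j ∈ M, (B j)ᶜ.indicator 1 ω := by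
  rw [card_filter]
  push_cast
  exact sum_congr rfl fun j _ => by by_cases h : ω ∈ B j <;> simp [h]

variable [MeasurableSpace Ω] {μ : Measure Ω}

theorem setIntegral_preimage_finset_eq_sum_fiber (X : Ω → ι)
    (hX : ∀ i, MeasurableSet (X ⁻¹' {i})) (s : Finset ι) (F : ι → Ω → ℝ)
    (hF : ∀ i ∈ s, IntegrableOn (F i) (X ⁻¹' {i}) μ) :
    ∫ ω in X ⁻¹' s, F (X ω) ω ∂μ = ∑ i ∈ s, ∫ ω in X ⁻¹' {i}, F i ω ∂μ := by
  have hF_fiber : ∀ i, Set.EqOn (fun ω => F (X ω) ω) (F i) (X ⁻¹' {i}) := by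
    rintro i ω rfl
    rfl
  rw [← Set.biUnion_preimage_singleton, Finset.set_biUnion_coe,
    integral_biUnion_finset s fun i _ => hX i]
  · exact sum_congr rfl fun i _ => setIntegral_congr_fun (hX i) (hF_fiber i)
  · exact fun i _ j _ hij => Set.disjoint_left.2 fun ω hi hj => hij (hi.symm.trans hj)
  · exact fun i hi => (hF i hi).congr_fun (hF_fiber i).symm (hX i)

variable [IsFiniteMeasure μ] {B : ι → Set Ω}

theorem integrable_card_filter_notMem (M : Finset ι) (hB : ∀ j ∈ M, MeasurableSet (B j)) :
    Integrable (fun ω => (#{j ∈ M | ω ∉ B j} : ℝ)) μ := by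
  simp_rw [card_filter_notMem_eq_sum_indicator]
  exact integrable_finsetSum _ fun j hj => (integrable_const 1).indicator (hB j hj).compl

theorem setIntegral_card_filter_notMem (M : Finset ι) (hB : ∀ j ∈ M, MeasurableSet (B j))
    (A : Set Ω) :
    ∫ ω in A, (#{j ∈ M | ω ∉ B j} : ℝ) ∂μ = ∑ j ∈ M, μ.real (A \ B j) := by
  simp_rw [card_filter_notMem_eq_sum_indicator]
  rw [integral_finsetSum _ fun j hj => (integrable_const 1).indicator (hB j hj).compl]
  refine sum_congr rfl fun j hj => ?_
  rw [integral_indicator_one (hB j hj).compl, measureReal_restrict_apply (hB j hj).compl,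
    Set.sdiff_eq, Set.inter_comm]

theorem measureReal_sdiff_le_of_le_cond {A B : Set Ω} (hA : MeasurableSet A) (hB : MeasurableSet B)
    {α : ℝ} (hcov : 0 < μ A → ENNReal.ofReal (1 - α) ≤ μ[B|A]) :
    μ.real (A \ B) ≤ α * μ.real A := by
  rcases eq_or_ne (μ A) 0 with hA0 | hA0
  · have hA0' : μ.real A = 0 := by simp [measureReal_def, hA0]
    rw [hA0', mul_zero, ← hA0']
    exact measureReal_mono Set.sdiff_subset
  have hApos : 0 < μ A := pos_iff_ne_zero.2 hA0
  have := cond_isProbabilityMeasure (μ := μ) hA0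
  have hcovB : 1 - α ≤ (μ[|A]).real B :=
    (ENNReal.ofReal_le_iff_le_toReal (measure_ne_top _ _)).1 (hcov hApos)
  have hdiff : μ.real (A \ B) = (μ[|A]).real Bᶜ * μ.real A := by
    rw [measureReal_def, measureReal_def, measureReal_def, ← ENNReal.toReal_mul,
      cond_mul_eq_inter hA, Set.sdiff_eq]
  rw [hdiff, probReal_compl_eq_one_sub hB]
  exact mul_le_mul_of_nonneg_right (by linarith) measureReal_nonneg

theorem setIntegral_card_filter_notMem_div_card_le (M : Finset ι)
    (hB : ∀ j ∈ M, MeasurableSet (B j)) {A : Set Ω} (hA : MeasurableSet A) {α : ℝ} (hα : 0 ≤ α)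
    (hcov : 0 < μ A → ∀ j ∈ M, ENNReal.ofReal (1 - α) ≤ μ[B j|A]) :
    ∫ ω in A, (#{j ∈ M | ω ∉ B j} : ℝ) / #M ∂μ ≤ α * μ.real A := by
  rw [integral_div, setIntegral_card_filter_notMem M hB]
  refine div_le_of_le_mul₀ (Nat.cast_nonneg _) (by positivity) ?_
  calc ∑ j ∈ M, μ.real (A \ B j) ≤ #M • (α * μ.real A) :=
        sum_le_card_nsmul _ _ _ fun j hj =>
          measureReal_sdiff_le_of_le_cond hA (hB j hj) fun h => hcov h j hj
    _ = α * μ.real A * #M := by rw [nsmul_eq_mul, mul_comm]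

end

/-- if every selected model has conditional coverage at least `1 - α`, then the
false coverage rate (the expected proportion of selected parameters not covered by their
intervals, over the event that a nonempty model is selected) is at most `α`. -/
theorem conditional_coverage_implies_fcr
    {Ω : Type*} [MeasurableSpace Ω] (P : Measure Ω) [IsProbabilityMeasure P]
    (p : ℕ) (Mhat : Ω → Finset (Fin p))
    (β : Finset (Fin p) → Fin p → ℝ)
    (C : Finset (Fin p) → Fin p → Ω → Set ℝ)
    (α : ℝ) (hα : 0 ≤ α)
    (hmeasM : ∀ M : Finset (Fin p), MeasurableSet {ω | Mhat ω = M})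
    (hmeasC : ∀ (M : Finset (Fin p)) (j : Fin p),
      MeasurableSet {ω | β M j ∈ C M j ω})
    (hcover : ∀ M : Finset (Fin p), 0 < P {ω | Mhat ω = M} → ∀ j ∈ M,
      ENNReal.ofReal (1 - α) ≤ P[|{ω | Mhat ω = M}] {ω | β M j ∈ C M j ω}) :
    ∫ ω in {ω | (Mhat ω).Nonempty},
        (((Mhat ω).filter fun j => β (Mhat ω) j ∉ C (Mhat ω) j ω).card : ℝ) /
          ((Mhat ω).card : ℝ) ∂P ≤ α := by
  set s : Finset (Finset (Fin p)) := {M | M.Nonempty}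
  have hs : {ω | (Mhat ω).Nonempty} = Mhat ⁻¹' s := by ext; simp [s]
  have hint : ∀ M, Integrable (fun ω => (#{j ∈ M | β M j ∉ C M j ω} : ℝ) / #M) P := fun M =>
    (integrable_card_filter_notMem (B := fun j => {ω | β M j ∈ C M j ω}) M
      fun j _ => hmeasC M j).div_const _
  rw [hs, setIntegral_preimage_finset_eq_sum_fiber Mhat hmeasM s _ fun M _ =>
    (hint M).integrableOn]
  calc ∑ M ∈ s, ∫ ω in Mhat ⁻¹' {M}, (#{j ∈ M | β M j ∉ C M j ω} : ℝ) / #M ∂P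
      ≤ ∑ M ∈ s, α * P.real (Mhat ⁻¹' {M}) := sum_le_sum fun M _ =>
        setIntegral_card_filter_notMem_div_card_le (B := fun j => {ω | β M j ∈ C M j ω}) M
          (fun j _ => hmeasC M j) (hmeasM M) hα (hcover M)
    _ = α * P.real (Mhat ⁻¹' s) := by
        rw [← mul_sum, sum_measureReal_preimage_singleton s fun M _ => hmeasM M]
    _ ≤ α := mul_le_of_le_one_right hα measureReal_le_one
end

section
/- For the truncated normal family TN(μ, σ², a, b) with fixed σ² > 0 and a < b, the CDF F_{μ,σ²}^{[a,b]}(x) satisfies: for each fixed x ∈ (a,b), lim_{μ → −∞} F_{μ,σ²}^{[a,b]}(x) = 1 and lim_{μ → +∞} F_{μ,σ²}^{[a,b]}(x) = 0. Consequently, for any α ∈ (0,1) and any x ∈ (a,b), there exist unique μ_L and μ_U with F_{μ_L,σ²}^{[a,b]}(x) = 1 − α/2 and F_{μ_U,σ²}^{[a,b]}(x) = α/2. -/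
/-!
Up to the factor `σ⁻¹ (2π)^{-1/2}`, which cancels, `F_μ(x) = E_μ(a,x) / E_μ(a,b)`, where
`E_μ(c,d) = gaussMass σ μ c d` integrates the kernel `exp(-((s-μ)/σ)²/2)` over `[c,d]`.
For `μ ≤ a` the kernel decreases on `[a,b]`, so `1 - F_μ(x) = E_μ(x,b) / E_μ(a,b)` is at most a
constant times the kernel ratio between `x` and a point `m ∈ (a,x)`, which is `O(exp((x-m)μ/σ²))`;
hence `F → 1` at `-∞`, and the reflection `s ↦ -s` turns this into `F → 0` at `+∞`.
The Gaussian location family has a strictly monotone likelihood ratio, which makes `F` strictly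
decreasing in `μ`; continuity and the intermediate value theorem give the unique solutions.
-/

open MeasureTheory ProbabilityTheory Filter

open Real Set

theorem StrictAnti.existsUnique_eq_of_tendsto {α β : Type*} [LinearOrder α] [TopologicalSpace α]
    [PreconnectedSpace α] [Nonempty α] [LinearOrder β] [TopologicalSpace β] [OrderTopology β]
    {f : α → β} (hf : StrictAnti f) (hfc : Continuous f)
    {l u y : β} (hbot : Tendsto f atBot (nhds u)) (htop : Tendsto f atTop (nhds l))
    (hy : y ∈ Ioo l u) : ∃! t, f t = y := by
  obtain ⟨t, ht⟩ := intermediate_value_univ₂_eventually₂ hfc continuous_const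
    (htop.eventually (eventually_le_nhds hy.1)) (hbot.eventually (eventually_ge_nhds hy.2))
  exact ⟨t, ht, fun t' ht' => hf.injective (ht'.trans ht.symm)⟩

lemma integral_mul_integral_lt_of_mul_lt_mul {g h : ℝ → ℝ} (hg : Continuous g)
    (hh : Continuous h) (h_pos : ∀ s, 0 < h s) (hgh : ∀ s u, s < u → g s * h u < h s * g u)
    {a x b : ℝ} (hax : a < x) (hxb : x < b) :
    (∫ s in a..x, g s) * (∫ s in x..b, h s) < (∫ s in a..x, h s) * ∫ s in x..b, g s := by
  set r := g x / h x
  have hrh : Continuous fun s => r * h s := continuous_const.mul hh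
  have hleft : ∫ s in a..x, g s < r * ∫ s in a..x, h s := by
    rw [← intervalIntegral.integral_const_mul, ← sub_pos,
      ← intervalIntegral.integral_sub (hrh.intervalIntegrable _ _) (hg.intervalIntegrable _ _)]
    refine intervalIntegral.intervalIntegral_pos_of_pos_on
      ((hrh.sub hg).intervalIntegrable _ _) (fun s hs => ?_) hax
    rw [sub_pos, div_mul_eq_mul_div, lt_div_iff₀ (h_pos x)]
    linarith [hgh s x hs.2]
  have hright : r * ∫ s in x..b, h s < ∫ s in x..b, g s := by
    rw [← intervalIntegral.integral_const_mul, ← sub_pos,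
      ← intervalIntegral.integral_sub (hg.intervalIntegrable _ _) (hrh.intervalIntegrable _ _)]
    refine intervalIntegral.intervalIntegral_pos_of_pos_on
      ((hg.sub hrh).intervalIntegrable _ _) (fun u hu => ?_) hxb
    rw [sub_pos, div_mul_eq_mul_div, div_lt_iff₀ (h_pos x)]
    linarith [hgh x u hu.1]
  have hpos_left :=
    intervalIntegral.intervalIntegral_pos_of_pos (hh.intervalIntegrable a x) h_pos hax
  have hpos_right :=
    intervalIntegral.intervalIntegral_pos_of_pos (hh.intervalIntegrable x b) h_pos hxb
  calc (∫ s in a..x, g s) * (∫ s in x..b, h s)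
      < (r * ∫ s in a..x, h s) * ∫ s in x..b, h s := mul_lt_mul_of_pos_right hleft hpos_right
    _ = (∫ s in a..x, h s) * (r * ∫ s in x..b, h s) := by ring
    _ < (∫ s in a..x, h s) * ∫ s in x..b, g s := mul_lt_mul_of_pos_left hright hpos_left

noncomputable def gaussKernel (σ μ s : ℝ) : ℝ := Real.exp (-((s - μ) / σ) ^ 2 / 2)

noncomputable def gaussMass (σ μ c d : ℝ) : ℝ := ∫ s in c..d, gaussKernel σ μ s

section GaussKernel

variable {σ μ : ℝ}

lemma gaussKernel_pos (σ μ s : ℝ) : 0 < gaussKernel σ μ s := Real.exp_pos _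

lemma continuous_gaussKernel (σ μ : ℝ) : Continuous (gaussKernel σ μ) := by
  unfold gaussKernel; fun_prop

lemma gaussKernel_neg (σ μ s : ℝ) : gaussKernel σ (-μ) s = gaussKernel σ μ (-s) := by
  unfold gaussKernel; ring_nf

lemma gaussKernel_antitoneOn (σ μ : ℝ) : AntitoneOn (gaussKernel σ μ) (Ici μ) := by
  intro s hs t _ hst
  simp only [gaussKernel, div_pow]
  gcongr
  exact sub_nonneg.2 (mem_Ici.1 hs)

lemma gaussKernel_div_gaussKernel (hσ : σ ≠ 0) (x m : ℝ) :
    gaussKernel σ μ x / gaussKernel σ μ m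
      = Real.exp ((x - m) / σ ^ 2 * μ + (m ^ 2 - x ^ 2) / (2 * σ ^ 2)) := by
  unfold gaussKernel
  rw [← Real.exp_sub]
  congr 1
  field_simp
  ring

lemma tendsto_gaussKernel_div_gaussKernel_atBot (hσ : σ ≠ 0) {m x : ℝ} (hmx : m < x) :
    Tendsto (fun μ => gaussKernel σ μ x / gaussKernel σ μ m) atBot (nhds 0) := by
  simp only [gaussKernel_div_gaussKernel hσ]
  refine Real.tendsto_exp_atBot.comp (tendsto_atBot_add_const_right _ _ ?_)
  exact tendsto_id.const_mul_atBot (div_pos (sub_pos.2 hmx) (by positivity))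

lemma gaussKernel_mul_gaussKernel_lt (hσ : σ ≠ 0) {μ₁ μ₂ s u : ℝ} (hμ : μ₁ < μ₂) (hsu : s < u) :
    gaussKernel σ μ₂ s * gaussKernel σ μ₁ u < gaussKernel σ μ₁ s * gaussKernel σ μ₂ u := by
  unfold gaussKernel
  rw [← Real.exp_add, ← Real.exp_add, Real.exp_lt_exp]
  have hsq : (s - μ₁) ^ 2 + (u - μ₂) ^ 2 < (s - μ₂) ^ 2 + (u - μ₁) ^ 2 := by
    nlinarith [mul_pos (sub_pos.2 hsu) (sub_pos.2 hμ)]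
  have hsum (p q : ℝ) :
      -(p / σ) ^ 2 / 2 + -(q / σ) ^ 2 / 2 = -((p ^ 2 + q ^ 2) / (2 * σ ^ 2)) := by
    ring
  rw [hsum, hsum, neg_lt_neg_iff]
  exact div_lt_div_of_pos_right hsq (by positivity)

end GaussKernel

section GaussMass

variable {σ μ : ℝ}

lemma intervalIntegrable_gaussKernel (σ μ c d : ℝ) :
    IntervalIntegrable (gaussKernel σ μ) volume c d :=
  (continuous_gaussKernel σ μ).intervalIntegrable c d

lemma gaussMass_pos (σ μ : ℝ) {c d : ℝ} (hcd : c < d) : 0 < gaussMass σ μ c d :=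
  intervalIntegral.intervalIntegral_pos_of_pos (intervalIntegrable_gaussKernel σ μ c d)
    (gaussKernel_pos σ μ) hcd

lemma gaussMass_nonneg (σ μ : ℝ) {c d : ℝ} (hcd : c ≤ d) : 0 ≤ gaussMass σ μ c d :=
  intervalIntegral.integral_nonneg hcd fun s _ => (gaussKernel_pos σ μ s).le

lemma gaussMass_add_gaussMass (σ μ a x b : ℝ) :
    gaussMass σ μ a x + gaussMass σ μ x b = gaussMass σ μ a b :=
  intervalIntegral.integral_add_adjacent_intervals
    (intervalIntegrable_gaussKernel σ μ a x) (intervalIntegrable_gaussKernel σ μ x b)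

lemma continuous_gaussMass (σ c d : ℝ) : Continuous fun μ => gaussMass σ μ c d :=
  intervalIntegral.continuous_parametric_intervalIntegral_of_continuous'
    (by unfold gaussKernel Function.uncurry; fun_prop) c d

lemma gaussMass_neg (σ μ c d : ℝ) : gaussMass σ (-μ) c d = gaussMass σ μ (-d) (-c) := by
  simp only [gaussMass, gaussKernel_neg, intervalIntegral.integral_comp_neg]

lemma gaussMass_le_mul {c d : ℝ} (hμc : μ ≤ c) (hcd : c ≤ d) :
    gaussMass σ μ c d ≤ (d - c) * gaussKernel σ μ c := by
  have h := intervalIntegral.integral_mono_on hcd (intervalIntegrable_gaussKernel σ μ c d)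
    intervalIntegrable_const fun s hs =>
      gaussKernel_antitoneOn σ μ (mem_Ici.2 hμc) (mem_Ici.2 (hμc.trans hs.1)) hs.1
  simpa [gaussMass] using h

lemma mul_le_gaussMass {c d : ℝ} (hμc : μ ≤ c) (hcd : c ≤ d) :
    (d - c) * gaussKernel σ μ d ≤ gaussMass σ μ c d := by
  have h := intervalIntegral.integral_mono_on hcd intervalIntegrable_const
    (intervalIntegrable_gaussKernel σ μ c d) fun s hs =>
      gaussKernel_antitoneOn σ μ (mem_Ici.2 (hμc.trans hs.1)) (mem_Ici.2 (hμc.trans hcd)) hs.2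
  simpa [gaussMass] using h

end GaussMass

lemma tendsto_gaussMass_div_gaussMass_atBot {σ a x b : ℝ} (hσ : σ ≠ 0) (hax : a < x)
    (hxb : x ≤ b) :
    Tendsto (fun μ => gaussMass σ μ x b / gaussMass σ μ a b) atBot (nhds 0) := by
  obtain ⟨m, ham, hmx⟩ := exists_between hax
  have hdecay := (tendsto_gaussKernel_div_gaussKernel_atBot hσ hmx).const_mul ((b - x) / (m - a))
  rw [mul_zero] at hdecay
  refine squeeze_zero' (Eventually.of_forall fun μ => ?_) ?_ hdecay
  · exact div_nonneg (gaussMass_nonneg σ μ hxb) (gaussMass_pos σ μ (hax.trans_le hxb)).le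
  filter_upwards [eventually_le_atBot a] with μ hμa
  have hnum : gaussMass σ μ x b ≤ (b - x) * gaussKernel σ μ x :=
    gaussMass_le_mul (by linarith) hxb
  have hden : (m - a) * gaussKernel σ μ m ≤ gaussMass σ μ a b := by
    rw [← gaussMass_add_gaussMass σ μ a m b]
    linarith [mul_le_gaussMass (σ := σ) hμa ham.le, gaussMass_nonneg σ μ (hmx.le.trans hxb)]
  calc gaussMass σ μ x b / gaussMass σ μ a b
      ≤ (b - x) * gaussKernel σ μ x / ((m - a) * gaussKernel σ μ m) :=
        div_le_div₀ (mul_nonneg (by linarith) (gaussKernel_pos σ μ x).le) hnum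
          (mul_pos (by linarith) (gaussKernel_pos σ μ m)) hden
    _ = (b - x) / (m - a) * (gaussKernel σ μ x / gaussKernel σ μ m) := mul_div_mul_comm _ _ _ _

lemma stdNormalCDF_sub_stdNormalCDF (y z : ℝ) :
    stdNormalCDF z - stdNormalCDF y = ∫ t in y..z, gaussianPDFReal 0 1 t := by
  have hint : Integrable (gaussianPDFReal 0 1) := integrable_gaussianPDFReal 0 1
  have hcdf (w : ℝ) : stdNormalCDF w = ∫ t in Iic w, gaussianPDFReal 0 1 t := by
    rw [stdNormalCDF, cdf_eq_real, measureReal_def, gaussianReal_apply_eq_integral 0 one_ne_zero,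
      ENNReal.toReal_ofReal (setIntegral_nonneg measurableSet_Iic fun t _ =>
        gaussianPDFReal_nonneg 0 1 t)]
  rw [hcdf, hcdf, intervalIntegral.integral_Iic_sub_Iic hint.integrableOn hint.integrableOn]

lemma stdNormalCDF_sub_stdNormalCDF_eq_gaussMass (σ μ c d : ℝ) :
    stdNormalCDF ((d - μ) / σ) - stdNormalCDF ((c - μ) / σ)
      = σ⁻¹ * (√(2 * π))⁻¹ * gaussMass σ μ c d := by
  rw [stdNormalCDF_sub_stdNormalCDF, sub_div c μ σ, sub_div d μ σ,
    ← intervalIntegral.inv_smul_integral_comp_div_sub, smul_eq_mul, mul_assoc]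
  congr 1
  rw [gaussMass, ← intervalIntegral.integral_const_mul]
  congr 1 with s
  simp [gaussianPDFReal, gaussKernel, ← sub_div]

lemma truncNormalCDF_eq_gaussMass_div {σ : ℝ} (hσ : σ ≠ 0) (μ a b x : ℝ) :
    truncNormalCDF μ σ a b x = gaussMass σ μ a x / gaussMass σ μ a b := by
  rw [truncNormalCDF, stdNormalCDF_sub_stdNormalCDF_eq_gaussMass,
    stdNormalCDF_sub_stdNormalCDF_eq_gaussMass,
    mul_div_mul_left _ _ (mul_ne_zero (inv_ne_zero hσ) (by positivity))]

section TruncNormalCDF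

variable {σ a b x : ℝ}

lemma one_sub_truncNormalCDF (hσ : σ ≠ 0) (hab : a < b) (μ : ℝ) :
    1 - truncNormalCDF μ σ a b x = gaussMass σ μ x b / gaussMass σ μ a b := by
  rw [truncNormalCDF_eq_gaussMass_div hσ, one_sub_div (gaussMass_pos σ μ hab).ne',
    ← gaussMass_add_gaussMass σ μ a x b, add_sub_cancel_left]

lemma truncNormalCDF_neg (hσ : σ ≠ 0) (hab : a < b) (μ : ℝ) :
    truncNormalCDF (-μ) σ (-b) (-a) (-x) = 1 - truncNormalCDF μ σ a b x := by
  rw [one_sub_truncNormalCDF hσ hab, truncNormalCDF_eq_gaussMass_div hσ, gaussMass_neg,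
    gaussMass_neg, neg_neg, neg_neg, neg_neg]

lemma tendsto_truncNormalCDF_atBot (hσ : σ ≠ 0) (hax : a < x) (hxb : x ≤ b) :
    Tendsto (fun μ => truncNormalCDF μ σ a b x) atBot (nhds 1) := by
  have h := (tendsto_gaussMass_div_gaussMass_atBot hσ hax hxb).const_sub 1
  simpa only [← one_sub_truncNormalCDF hσ (hax.trans_le hxb), sub_sub_cancel, sub_zero] using h

lemma tendsto_truncNormalCDF_atTop (hσ : σ ≠ 0) (hax : a ≤ x) (hxb : x < b) :
    Tendsto (fun μ => truncNormalCDF μ σ a b x) atTop (nhds 0) := by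
  have h := ((tendsto_truncNormalCDF_atBot hσ (neg_lt_neg hxb) (neg_le_neg hax)).comp
    tendsto_neg_atTop_atBot).const_sub 1
  simpa only [Function.comp_def, truncNormalCDF_neg hσ (hax.trans_lt hxb), sub_sub_cancel,
    sub_self] using h

lemma continuous_truncNormalCDF (hσ : σ ≠ 0) (hab : a < b) :
    Continuous fun μ => truncNormalCDF μ σ a b x := by
  simp only [truncNormalCDF_eq_gaussMass_div hσ]
  exact (continuous_gaussMass σ a x).div (continuous_gaussMass σ a b)
    fun μ => (gaussMass_pos σ μ hab).ne'

end TruncNormalCDF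

lemma strictAnti_truncNormalCDF {σ a b x : ℝ} (hσ : σ ≠ 0) (hax : a < x) (hxb : x < b) :
    StrictAnti fun μ => truncNormalCDF μ σ a b x := by
  intro μ₁ μ₂ hμ
  have hcross := integral_mul_integral_lt_of_mul_lt_mul (continuous_gaussKernel σ μ₂)
    (continuous_gaussKernel σ μ₁) (gaussKernel_pos σ μ₁)
    (fun s u hsu => gaussKernel_mul_gaussKernel_lt hσ hμ hsu) hax hxb
  simp only [truncNormalCDF_eq_gaussMass_div hσ]
  rw [div_lt_div_iff₀ (gaussMass_pos σ μ₂ (hax.trans hxb)) (gaussMass_pos σ μ₁ (hax.trans hxb)),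
    ← gaussMass_add_gaussMass σ μ₁ a x b, ← gaussMass_add_gaussMass σ μ₂ a x b]
  simp only [gaussMass] at hcross ⊢
  linarith

theorem truncNormalCDF_limits_and_unique_solutions_general
    (σ a b x : ℝ) (hσ : 0 < σ) (hx : x ∈ Set.Ioo a b) :
    Tendsto (fun μ : ℝ => truncNormalCDF μ σ a b x) atBot (nhds 1) ∧
    Tendsto (fun μ : ℝ => truncNormalCDF μ σ a b x) atTop (nhds 0) ∧
    ∀ α ∈ Set.Ioo (0 : ℝ) 1,
      (∃! μL : ℝ, truncNormalCDF μL σ a b x = 1 - α / 2) ∧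
      (∃! μU : ℝ, truncNormalCDF μU σ a b x = α / 2) := by
  obtain ⟨hax, hxb⟩ := hx
  have hbot := tendsto_truncNormalCDF_atBot hσ.ne' hax hxb.le
  have htop := tendsto_truncNormalCDF_atTop hσ.ne' hax.le hxb
  have hsolve : ∀ y ∈ Ioo (0 : ℝ) 1, ∃! μ, truncNormalCDF μ σ a b x = y := fun y hy =>
    (strictAnti_truncNormalCDF hσ.ne' hax hxb).existsUnique_eq_of_tendsto
      (continuous_truncNormalCDF hσ.ne' (hax.trans hxb)) hbot htop hy
  refine ⟨hbot, htop, fun α ⟨hα₀, hα₁⟩ => ⟨hsolve _ ⟨?_, ?_⟩, hsolve _ ⟨?_, ?_⟩⟩⟩ <;> linarith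

/-- for fixed `x ∈ (a,b)`, `F_{μ,σ²}^{[a,b]}(x) → 1` as `μ → −∞` and `→ 0` as
`μ → +∞`; consequently for any `α ∈ (0,1)` there are unique `μ_L`, `μ_U` with
`F_{μ_L,σ²}^{[a,b]}(x) = 1 − α/2` and `F_{μ_U,σ²}^{[a,b]}(x) = α/2`. -/
theorem truncNormalCDF_limits_and_unique_solutions
    (σ a b x : ℝ) (hσ : 0 < σ) (hab : a < b) (hx : x ∈ Set.Ioo a b) :
    Tendsto (fun μ : ℝ => truncNormalCDF μ σ a b x) atBot (nhds 1) ∧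
    Tendsto (fun μ : ℝ => truncNormalCDF μ σ a b x) atTop (nhds 0) ∧
    ∀ α ∈ Set.Ioo (0 : ℝ) 1,
      (∃! μL : ℝ, truncNormalCDF μL σ a b x = 1 - α / 2) ∧
      (∃! μU : ℝ, truncNormalCDF μU σ a b x = α / 2) :=
  truncNormalCDF_limits_and_unique_solutions_general σ a b x hσ hx
end
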